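/- arXiv:0802.1567 — 3 statements merged into one kernel-verified Lean document; each statement's English description precedes it below -/
import Mathlib

section
/- Given two Slepian-Wolf codes (g₁, ψ₁) for source X with side information Y and (g₂, ψ₂) for source Y with side information X, with codeword index sets of sizes M₁ and M₂ respectively, there exists a complementary delivery code (f, φ₁, φ₂) with codeword set of size max(M₁, M₂) such that for every pair (x,y): if ψ₁(g₁(x), y) = x then φ₁(f(x,y), y) = x, and if ψ₂(g₂(y), x) = y then φ₂(f(x,y), x) = y. Consequently, for any joint source (Xⁿ, Yⁿ), the error probability of φ₁ is at most that of ψ₁∘g₁, and similarly for φ₂. -/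
/-!
Embed both index sets into the cyclic group `Fin (max M₁ M₂)` and send the sum of the two
Slepian-Wolf indices. A receiver knowing `y` knows `g₂ y`, so subtracting it recovers `g₁ x`
exactly and the Slepian-Wolf decoder `ψ₁` sees the same input as before; symmetrically for
the receiver knowing `x`. Hence the complementary decoders agree pointwise with the
Slepian-Wolf ones and the error probabilities are even equal.
-/

open Function

namespace ComplementaryDelivery

variable {α β ι₁ ι₂ G : Type*} [AddCommGroup G]

def encode (j₁ : ι₁ → G) (j₂ : ι₂ → G) (g₁ : α → ι₁) (g₂ : β → ι₂) (x : α) (y : β) : G :=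
  j₁ (g₁ x) + j₂ (g₂ y)

def decode₁ (r₁ : G → ι₁) (j₂ : ι₂ → G) (g₂ : β → ι₂) (ψ₁ : ι₁ → β → α) (m : G) (y : β) : α :=
  ψ₁ (r₁ (m - j₂ (g₂ y))) y

def decode₂ (r₂ : G → ι₂) (j₁ : ι₁ → G) (g₁ : α → ι₁) (ψ₂ : ι₂ → α → β) (m : G) (x : α) : β :=
  ψ₂ (r₂ (m - j₁ (g₁ x))) x

theorem decode₁_encode {r₁ : G → ι₁} {j₁ : ι₁ → G} (h₁ : LeftInverse r₁ j₁) (j₂ : ι₂ → G)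
    (g₁ : α → ι₁) (g₂ : β → ι₂) (ψ₁ : ι₁ → β → α) (x : α) (y : β) :
    decode₁ r₁ j₂ g₂ ψ₁ (encode j₁ j₂ g₁ g₂ x y) y = ψ₁ (g₁ x) y := by
  simp only [decode₁, encode, add_sub_cancel_right, h₁ (g₁ x)]

theorem decode₂_encode {r₂ : G → ι₂} (j₁ : ι₁ → G) {j₂ : ι₂ → G} (h₂ : LeftInverse r₂ j₂)
    (g₁ : α → ι₁) (g₂ : β → ι₂) (ψ₂ : ι₂ → α → β) (x : α) (y : β) :
    decode₂ r₂ j₁ g₁ ψ₂ (encode j₁ j₂ g₁ g₂ x y) x = ψ₂ (g₂ y) x := by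
  simp only [decode₂, encode, add_sub_cancel_left, h₂ (g₂ y)]

end ComplementaryDelivery

open ComplementaryDelivery in
/-- From two Slepian-Wolf codes `(g₁,ψ₁)` (for `X` with side information `Y`)
and `(g₂,ψ₂)` (for `Y` with side information `X`), with index-set sizes `M₁` and `M₂`,
there exists a complementary delivery code `(f,φ₁,φ₂)` with index set of size `max M₁ M₂`
such that correct SW decoding implies correct complementary-delivery decoding pointwise;
consequently for every joint source distribution the error probability of `φ₁` is at most
that of `ψ₁ ∘ g₁`, and similarly for `φ₂`. -/
theorem stmt1 (Xn Yn : Type) [Fintype Xn] [Fintype Yn] [DecidableEq Xn] [DecidableEq Yn]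
    (M₁ M₂ : ℕ) (hM₁ : 0 < M₁) (hM₂ : 0 < M₂)
    (g₁ : Xn → Fin M₁) (ψ₁ : Fin M₁ → Yn → Xn)
    (g₂ : Yn → Fin M₂) (ψ₂ : Fin M₂ → Xn → Yn) :
    ∃ (f : Xn → Yn → Fin (max M₁ M₂)) (φ₁ : Fin (max M₁ M₂) → Yn → Xn)
      (φ₂ : Fin (max M₁ M₂) → Xn → Yn),
      (∀ x y, ψ₁ (g₁ x) y = x → φ₁ (f x y) y = x) ∧
      (∀ x y, ψ₂ (g₂ y) x = y → φ₂ (f x y) x = y) ∧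
      (∀ P : Xn × Yn → ℝ, (∀ z, 0 ≤ P z) →
        (∑ z : Xn × Yn, if φ₁ (f z.1 z.2) z.2 ≠ z.1 then P z else 0) ≤
          ∑ z : Xn × Yn, if ψ₁ (g₁ z.1) z.2 ≠ z.1 then P z else 0) ∧
      (∀ P : Xn × Yn → ℝ, (∀ z, 0 ≤ P z) →
        (∑ z : Xn × Yn, if φ₂ (f z.1 z.2) z.1 ≠ z.2 then P z else 0) ≤
          ∑ z : Xn × Yn, if ψ₂ (g₂ z.2) z.1 ≠ z.2 then P z else 0) := by
  have : NeZero (max M₁ M₂) := NeZero.of_pos (lt_max_of_lt_left hM₁)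
  have : Nonempty (Fin M₁) := ⟨⟨0, hM₁⟩⟩
  have : Nonempty (Fin M₂) := ⟨⟨0, hM₂⟩⟩
  set j₁ := Fin.castLE (le_max_left M₁ M₂)
  set j₂ := Fin.castLE (le_max_right M₁ M₂)
  have h₁ : LeftInverse (invFun j₁) j₁ := leftInverse_invFun (Fin.castLE_injective _)
  have h₂ : LeftInverse (invFun j₂) j₂ := leftInverse_invFun (Fin.castLE_injective _)
  refine ⟨encode j₁ j₂ g₁ g₂, decode₁ (invFun j₁) j₂ g₂ ψ₁, decode₂ (invFun j₂) j₁ g₁ ψ₂,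
    ?_, ?_, ?_, ?_⟩
  · exact fun x y hx => (decode₁_encode h₁ _ _ _ _ x y).trans hx
  · exact fun x y hy => (decode₂_encode j₁ h₂ _ _ _ x y).trans hy
  · intro P _
    simp only [decode₁_encode h₁, le_refl]
  · intro P _
    simp only [decode₂_encode j₁ h₂, le_refl]
end

section
/- Assume X = Y is a finite Galois field, fix k ≤ n, and let R = (k/n)·log|X|. Given linear Slepian-Wolf codes g₁ : Xⁿ → X^k with decoder ψ₁ achieving error probability at most exp{−n(e_r¹(R, P_{XY}) − ε_n)} for recovering Xⁿ from (g₁(Xⁿ), Yⁿ), and g₂ : Yⁿ → Y^k with decoder ψ₂ achieving error at most exp{−n(e_r²(R, P_{XY}) − ε_n)} for recovering Yⁿ from (g₂(Yⁿ), Xⁿ), the combined complementary delivery code with encoder f(x,y) = g₁(x) + g₂(y) (field addition in X^k) satisfies (1/n)·log|range of f| ≤ R and achieves the same two error exponent bounds at decoders 1 and 2 respectively. -/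
open Finset

/-- Kullback-Leibler divergence (base 2) between distributions on a finite set. -/
noncomputable def klDiv2 {A : Type*} [Fintype A] (Q P : A → ℝ) : ℝ :=
  ∑ a, Q a * Real.logb 2 (Q a / P a)

/-- Conditional entropy (base 2) of the first coordinate given the second, for a joint
distribution `Q` on `A × B`. -/
noncomputable def condEnt1 {A B : Type*} [Fintype A] [Fintype B] (Q : A × B → ℝ) : ℝ :=
  -∑ z : A × B, Q z * Real.logb 2 (Q z / (∑ a, Q (a, z.2)))

/-- The random-coding error exponent
`e_r(R, P) = min_Q {D(Q‖P) + |R − H_Q(X̃|Ỹ)|⁺}`. -/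
noncomputable def erExp {A B : Type*} [Fintype A] [Fintype B]
    (R : ℝ) (P : A × B → ℝ) : ℝ :=
  sInf { e | ∃ Q : A × B → ℝ, (∀ z, 0 ≤ Q z) ∧ (∑ z : A × B, Q z = 1) ∧
    e = klDiv2 Q P + max (R - condEnt1 Q) 0 }

/-- Over a finite (Galois) field alphabet `X = Y`, combining two linear
Slepian-Wolf codes of rate `R = (k/n)·log|X|` achieving the random-coding exponents
`e_r¹` and `e_r²` yields a complementary delivery code with encoder
`f(x,y) = g₁(x) + g₂(y)`, rate at most `R`, achieving the same two error bounds. -/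
theorem stmt15 (X : Type) [Field X] [Fintype X] [DecidableEq X]
    (n k : ℕ) (hn : 0 < n) (hk : k ≤ n) (R : ℝ)
    (hR : R = (k : ℝ) / n * Real.logb 2 (Fintype.card X))
    (P : (Fin n → X) × (Fin n → X) → ℝ)
    (hP0 : ∀ z, 0 ≤ P z) (hP1 : ∑ z : (Fin n → X) × (Fin n → X), P z = 1)
    (g₁ : (Fin n → X) → Fin k → X) (hg₁ : IsLinearMap X g₁)
    (ψ₁ : (Fin k → X) → (Fin n → X) → Fin n → X)
    (g₂ : (Fin n → X) → Fin k → X) (hg₂ : IsLinearMap X g₂)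
    (ψ₂ : (Fin k → X) → (Fin n → X) → Fin n → X)
    (εn : ℝ)
    (hεn : εn = 2 * Real.logb 2 (n + 1) / n *
      ((Fintype.card X : ℝ) ^ 2 * (Fintype.card X : ℝ) ^ 2))
    (h1 : (∑ z : (Fin n → X) × (Fin n → X),
        if ψ₁ (g₁ z.1) z.2 ≠ z.1 then P z else 0) ≤
      (2 : ℝ) ^ (-(n : ℝ) * (erExp R P - εn)))
    (h2 : (∑ z : (Fin n → X) × (Fin n → X),
        if ψ₂ (g₂ z.2) z.1 ≠ z.2 then P z else 0) ≤
      (2 : ℝ) ^ (-(n : ℝ) *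
        (erExp R (fun z : (Fin n → X) × (Fin n → X) => P (z.2, z.1)) - εn))) :
    ∃ (f : (Fin n → X) → (Fin n → X) → Fin k → X)
      (φ₁ : (Fin k → X) → (Fin n → X) → Fin n → X)
      (φ₂ : (Fin k → X) → (Fin n → X) → Fin n → X),
      (∀ x y, f x y = g₁ x + g₂ y) ∧
      (1 / (n : ℝ)) * Real.logb 2 (Fintype.card (Fin k → X)) ≤ R ∧
      (∑ z : (Fin n → X) × (Fin n → X),
          if φ₁ (f z.1 z.2) z.2 ≠ z.1 then P z else 0) ≤
        (2 : ℝ) ^ (-(n : ℝ) * (erExp R P - εn)) ∧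
      (∑ z : (Fin n → X) × (Fin n → X),
          if φ₂ (f z.1 z.2) z.1 ≠ z.2 then P z else 0) ≤
        (2 : ℝ) ^ (-(n : ℝ) *
          (erExp R (fun z : (Fin n → X) × (Fin n → X) => P (z.2, z.1)) - εn)) := by
  refine ⟨fun x y => g₁ x + g₂ y,
    fun m y => ψ₁ (m - g₂ y) y,
    fun m x => ψ₂ (m - g₁ x) x,
    fun _ _ => rfl, ?_, ?_, ?_⟩
  · have hcard : (Fintype.card (Fin k → X) : ℝ) = (Fintype.card X : ℝ) ^ k := by
      rw [Fintype.card_fun, Fintype.card_fin]; push_cast; ring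
    rw [hcard, Real.logb_pow, hR]
    rw [div_mul_eq_mul_div]; ring_nf; rfl
  · simpa using h1
  · simpa using h2
end

section
/- For rates R with max{H(X|Y), H(Y|X)} ≤ R, the random-coding exponents satisfy e_r¹(R, P_{XY}) > 0 and e_r²(R, P_{XY}) > 0 whenever R > max{H(X|Y), H(Y|X)}, where e_r¹(R, P) = min_{Q} {D(Q ‖ P) + |R − H_Q(X̃|Ỹ)|⁺} over joint distributions Q on X × Y (and e_r² symmetrically). Consequently the error probability of the linear-code-based complementary delivery scheme vanishes exponentially for all rates above max{H(X|Y), H(Y|X)}. -/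
open Filter

/-! The objective `Q ↦ D(Q‖P) + |R − H_Q(X̃|Ỹ)|⁺` is continuous on the compact probability
simplex (`x log x` extends continuously to `0`, and `H_Q(X̃|Ỹ) = H_Q(X̃,Ỹ) − H_Q(Ỹ)`), so the
infimum is attained. It is positive at every `Q`: Gibbs' inequality, in the form
`D(Q‖P) = ∑ P · klFun (Q / P)`, makes the divergence positive unless `Q = P`, and at `Q = P` the
second term is `R − H(X|Y) > 0`. A positive exponent then dominates the correction
`log(n+1)/n → 0`. -/

open Real InformationTheory

variable {A B : Type*} [Fintype A] [Fintype B]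

lemma mul_logb_div_eq_klFun {q p : ℝ} (hp : p ≠ 0) :
    q * logb 2 (q / p) = (p * klFun (q / p) + q - p) / log 2 := by
  rw [klFun, logb]
  field_simp
  ring

lemma klDiv2_eq_sum_klFun {Q P : A → ℝ} (hP : ∀ a, P a ≠ 0)
    (hsum : ∑ a, Q a = ∑ a, P a) :
    klDiv2 Q P = (∑ a, P a * klFun (Q a / P a)) / log 2 := by
  simp only [klDiv2, mul_logb_div_eq_klFun (hP _), ← Finset.sum_div, Finset.sum_sub_distrib,
    Finset.sum_add_distrib, hsum, add_sub_cancel_right]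

lemma klDiv2_nonneg {Q P : A → ℝ} (hQ : ∀ a, 0 ≤ Q a)
    (hP : ∀ a, 0 < P a) (hsum : ∑ a, Q a = ∑ a, P a) : 0 ≤ klDiv2 Q P := by
  rw [klDiv2_eq_sum_klFun (fun a => (hP a).ne') hsum]
  have hterm (a : A) : 0 ≤ P a * klFun (Q a / P a) :=
    mul_nonneg (hP a).le (klFun_nonneg (div_nonneg (hQ a) (hP a).le))
  exact div_nonneg (Finset.sum_nonneg fun a _ => hterm a) (log_nonneg one_le_two)

lemma klDiv2_pos {Q P : A → ℝ} (hQ : ∀ a, 0 ≤ Q a)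
    (hP : ∀ a, 0 < P a) (hsum : ∑ a, Q a = ∑ a, P a) (hne : Q ≠ P) : 0 < klDiv2 Q P := by
  rw [klDiv2_eq_sum_klFun (fun a => (hP a).ne') hsum]
  have hratio (a : A) : 0 ≤ Q a / P a := div_nonneg (hQ a) (hP a).le
  have hterm (a : A) : 0 ≤ P a * klFun (Q a / P a) :=
    mul_nonneg (hP a).le (klFun_nonneg (hratio a))
  obtain ⟨a, ha⟩ := Function.ne_iff.mp hne
  have hpos : 0 < P a * klFun (Q a / P a) :=
    mul_pos (hP a) ((klFun_nonneg (hratio a)).lt_of_ne'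
      (mt (klFun_eq_zero_iff (hratio a)).1 (div_ne_one_of_ne ha)))
  exact div_pos (Finset.sum_pos' (fun a _ => hterm a) ⟨a, Finset.mem_univ a, hpos⟩)
    (log_pos one_lt_two)

lemma continuous_klDiv2_left {P : A → ℝ} (hP : ∀ a, P a ≠ 0) :
    Continuous fun Q => klDiv2 Q P := by
  simp only [klDiv2, mul_logb_div_eq_klFun (hP _)]
  have := continuous_klFun
  fun_prop

lemma condEnt1_eq_sub {Q : A × B → ℝ}
    (hQ : ∀ z, 0 ≤ Q z) :
    condEnt1 Q = (∑ z, negMulLog (Q z) - ∑ b, negMulLog (∑ a, Q (a, b))) / log 2 := by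
  have hterm (z : A × B) : Q z * logb 2 (Q z / ∑ a, Q (a, z.2)) =
      -(negMulLog (Q z) + Q z * log (∑ a, Q (a, z.2))) / log 2 := by
    rcases (hQ z).eq_or_lt with hz | hz
    · simp [← hz]
    have hmarg : 0 < ∑ a, Q (a, z.2) :=
      hz.trans_le (Finset.single_le_sum (fun a _ => hQ (a, z.2)) (Finset.mem_univ z.1))
    rw [logb, log_div hz.ne' hmarg.ne', negMulLog]
    ring
  have hfiber : ∑ z : A × B, Q z * log (∑ a, Q (a, z.2)) = -∑ b, negMulLog (∑ a, Q (a, b)) := by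
    simp only [Fintype.sum_prod_type_right, ← Finset.sum_mul, negMulLog, Finset.sum_neg_distrib,
      neg_mul, neg_neg]
  rw [condEnt1]
  simp only [hterm, neg_div, Finset.sum_neg_distrib, ← Finset.sum_div, Finset.sum_add_distrib,
    hfiber]
  ring

lemma continuousOn_condEnt1 :
    ContinuousOn (condEnt1 (A := A) (B := B)) {Q | ∀ z, 0 ≤ Q z} := by
  refine ContinuousOn.congr ?_ fun Q hQ => condEnt1_eq_sub hQ
  have := continuous_negMulLog
  fun_prop

lemma erExp_pos {P : A × B → ℝ} (hP0 : ∀ z, 0 < P z)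
    (hP1 : ∑ z, P z = 1) {R : ℝ} (hR : condEnt1 P < R) : 0 < erExp R P := by
  set f : (A × B → ℝ) → ℝ := fun Q => klDiv2 Q P + max (R - condEnt1 Q) 0
  have hset : {e | ∃ Q : A × B → ℝ, (∀ z, 0 ≤ Q z) ∧ (∑ z, Q z = 1) ∧ e = f Q} =
      f '' stdSimplex ℝ (A × B) := by
    ext e
    simp [stdSimplex, eq_comm, and_assoc]
  have hf : ContinuousOn f (stdSimplex ℝ (A × B)) := by
    have := (continuous_klDiv2_left fun z => (hP0 z).ne').continuousOn (s := stdSimplex ℝ (A × B))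
    have := continuousOn_condEnt1.mono fun (Q : A × B → ℝ) (hQ : Q ∈ stdSimplex ℝ _) => hQ.1
    fun_prop
  have hpos : ∀ Q ∈ stdSimplex ℝ (A × B), 0 < f Q := by
    rintro Q ⟨hQ0, hQ1⟩
    rcases eq_or_ne Q P with rfl | hne
    · exact add_pos_of_nonneg_of_pos (klDiv2_nonneg hQ0 hP0 rfl)
        ((sub_pos.2 hR).trans_le (le_max_left _ _))
    · exact add_pos_of_pos_of_nonneg (klDiv2_pos hQ0 hP0 (hQ1.trans hP1.symm) hne)
        (le_max_right _ _)
  obtain ⟨Q, hQ, hQmin⟩ := (isCompact_stdSimplex ℝ (A × B)).image_of_continuousOn hf |>.sInf_mem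
    ⟨f P, P, ⟨fun z => (hP0 z).le, hP1⟩, rfl⟩
  rw [erExp, hset, ← hQmin]
  exact hpos Q hQ

lemma tendsto_logb_add_one_div_atTop :
    Tendsto (fun n : ℕ => logb 2 (n + 1) / n) atTop (nhds 0) := by
  have := (tendsto_pow_logb_div_mul_add_atTop (b := 2) 1 (-1) 1 one_ne_zero).comp
    (tendsto_atTop_add_const_right atTop 1 tendsto_natCast_atTop_atTop)
  simpa [Function.comp_def] using this

lemma tendsto_two_rpow_neg_mul {f : ℕ → ℝ} {e : ℝ} (he : 0 < e)
    (hf : Tendsto f atTop (nhds e)) :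
    Tendsto (fun n : ℕ => (2 : ℝ) ^ (-(n : ℝ) * f n)) atTop (nhds 0) := by
  have := tendsto_neg_atTop_atBot.comp (tendsto_natCast_atTop_atTop.atTop_mul_pos he hf)
  simpa [Function.comp_def, neg_mul] using
    (tendsto_rpow_atBot_of_base_gt_one 2 one_lt_two).comp this

theorem stmt16_general (X Y : Type) [Fintype X] [Fintype Y]
    (P : X × Y → ℝ) (hP0 : ∀ z, 0 < P z) (hP1 : ∑ z : X × Y, P z = 1)
    (R : ℝ)
    (hR : max (condEnt1 P) (condEnt1 (fun z : Y × X => P (z.2, z.1))) < R) :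
    0 < erExp R P ∧
    0 < erExp R (fun z : Y × X => P (z.2, z.1)) ∧
    Tendsto (fun n : ℕ => (2 : ℝ) ^ (-(n : ℝ) * (erExp R P -
        2 * Real.logb 2 (n + 1) / n *
          ((Fintype.card X : ℝ) ^ 2 * (Fintype.card Y : ℝ) ^ 2))))
      atTop (nhds 0) ∧
    Tendsto (fun n : ℕ => (2 : ℝ) ^ (-(n : ℝ) *
        (erExp R (fun z : Y × X => P (z.2, z.1)) -
          2 * Real.logb 2 (n + 1) / n *
            ((Fintype.card X : ℝ) ^ 2 * (Fintype.card Y : ℝ) ^ 2))))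
      atTop (nhds 0) := by
  have hP1swap : ∑ z : Y × X, P (z.2, z.1) = 1 :=
    (Fintype.sum_equiv (Equiv.prodComm Y X) _ _ fun _ => rfl).trans hP1
  have he₁ : 0 < erExp R P := erExp_pos hP0 hP1 ((le_max_left _ _).trans_lt hR)
  have he₂ : 0 < erExp R (fun z : Y × X => P (z.2, z.1)) :=
    erExp_pos (fun _ => hP0 _) hP1swap ((le_max_right _ _).trans_lt hR)
  have hε : Tendsto (fun n : ℕ => 2 * logb 2 (n + 1) / n *
      ((Fintype.card X : ℝ) ^ 2 * (Fintype.card Y : ℝ) ^ 2)) atTop (nhds 0) := by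
    simpa [mul_div_assoc] using (tendsto_logb_add_one_div_atTop.const_mul 2).mul_const
      ((Fintype.card X : ℝ) ^ 2 * (Fintype.card Y : ℝ) ^ 2)
  refine ⟨he₁, he₂, tendsto_two_rpow_neg_mul he₁ ?_, tendsto_two_rpow_neg_mul he₂ ?_⟩ <;>
    simpa using tendsto_const_nhds.sub hε

/-- For `R > max{H(X|Y), H(Y|X)}`, both random-coding exponents are
positive, and consequently the exponential error bounds
`2^{−n(e_r − ε_n)}` of the linear-code-based complementary delivery scheme vanish
as `n → ∞`. -/
theorem stmt16 (X Y : Type) [Fintype X] [Fintype Y] [Nonempty X] [Nonempty Y]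
    (P : X × Y → ℝ) (hP0 : ∀ z, 0 < P z) (hP1 : ∑ z : X × Y, P z = 1)
    (R : ℝ)
    (hR : max (condEnt1 P) (condEnt1 (fun z : Y × X => P (z.2, z.1))) < R) :
    0 < erExp R P ∧
    0 < erExp R (fun z : Y × X => P (z.2, z.1)) ∧
    Tendsto (fun n : ℕ => (2 : ℝ) ^ (-(n : ℝ) * (erExp R P -
        2 * Real.logb 2 (n + 1) / n *
          ((Fintype.card X : ℝ) ^ 2 * (Fintype.card Y : ℝ) ^ 2))))
      atTop (nhds 0) ∧
    Tendsto (fun n : ℕ => (2 : ℝ) ^ (-(n : ℝ) *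
        (erExp R (fun z : Y × X => P (z.2, z.1)) -
          2 * Real.logb 2 (n + 1) / n *
            ((Fintype.card X : ℝ) ^ 2 * (Fintype.card Y : ℝ) ^ 2))))
      atTop (nhds 0) :=
  stmt16_general X Y P hP0 hP1 R hR
end
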